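/- arXiv:2106.12751 — 2 statements merged into one kernel-verified Lean document; each statement's English description precedes it below -/
import Mathlib

section
/- Let Y ∈ {0,1}^{n×L} and M ∈ {0,1}^{n×K} be binary matrices, let λ ≥ 1, and let C* ∈ {0,1}^{L×K} be the row-wise top-λ matrix: for each row ℓ, C*_{ℓj} = 1 exactly for a set of λ column indices j achieving the λ largest values of (YᵀM)_{ℓj}. Then for every clustering matrix C ∈ {0,1}^{L×K} having exactly one nonzero entry per row (i.e., C corresponds to a non-overlapping partition of the label set into K clusters), Tr(Yᵀ Binary(M (C*)ᵀ)) ≥ Tr(Yᵀ Binary(M Cᵀ)); the overlapping top-λ assignment achieves a matcher precision objective at least as large as that of any non-overlapping partition. -/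
open Matrix Finset

/-- `Binary(A)`: the entrywise indicator matrix, with value 1 where the entry is
positive and 0 otherwise. -/
noncomputable def binaryMatrix {α β : Type*} (A : Matrix α β ℝ) : Matrix α β ℝ :=
  fun i j => if 0 < A i j then 1 else 0

/-- The overlapping row-wise top-`lam` assignment `C*` achieves a matcher
precision objective `Tr(Yᵀ Binary(M Cᵀ))` at least as large as that of any
non-overlapping partition `C` (exactly one nonzero entry per row). -/
theorem top_lambda_dominates_nonoverlapping
    {n L K : ℕ} (lam : ℕ) (hlam : 1 ≤ lam)
    (Y : Matrix (Fin n) (Fin L) ℝ) (M : Matrix (Fin n) (Fin K) ℝ)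
    (hY : ∀ i l, Y i l = 0 ∨ Y i l = 1)
    (hM : ∀ i j, M i j = 0 ∨ M i j = 1)
    (S : Fin L → Finset (Fin K))
    (hScard : ∀ l, (S l).card = lam)
    (hStop : ∀ l, ∀ j ∈ S l, ∀ j' ∉ S l, (Yᵀ * M) l j' ≤ (Yᵀ * M) l j)
    (Cstar : Matrix (Fin L) (Fin K) ℝ)
    (hCstar : ∀ l j, Cstar l j = if j ∈ S l then 1 else 0)
    (C : Matrix (Fin L) (Fin K) ℝ)
    (hC : ∀ l j, C l j = 0 ∨ C l j = 1)
    (hCrow : ∀ l, (Finset.univ.filter fun j => C l j ≠ 0).card = 1) :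
    (Yᵀ * binaryMatrix (M * Cᵀ)).trace ≤ (Yᵀ * binaryMatrix (M * Cstarᵀ)).trace := by
  simp only [Matrix.trace, Matrix.diag, Matrix.mul_apply, Matrix.transpose_apply]
  apply Finset.sum_le_sum
  intro l _
  -- extract the unique nonzero column of row l of C
  obtain ⟨j0, hj0⟩ := Finset.card_eq_one.mp (hCrow l)
  have hj0mem : C l j0 ≠ 0 := by
    have : j0 ∈ Finset.univ.filter fun j => C l j ≠ 0 := by rw [hj0]; simp
    simpa using this
  have hCj0 : C l j0 = 1 := (hC l j0).resolve_left hj0mem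
  have hCother : ∀ j, j ≠ j0 → C l j = 0 := by
    intro j hj
    by_contra h
    have : j ∈ Finset.univ.filter fun j => C l j ≠ 0 := by simp [h]
    rw [hj0] at this
    exact hj (Finset.mem_singleton.mp this)
  -- LHS row value equals (Yᵀ M) l j0
  have hLHS : ∀ i, binaryMatrix (M * Cᵀ) i l = M i j0 := by
    intro i
    have hMC : (M * Cᵀ) i l = M i j0 := by
      rw [Matrix.mul_apply]
      rw [Finset.sum_eq_single j0]
      · simp [Matrix.transpose_apply, hCj0]
      · intro j _ hj
        simp [Matrix.transpose_apply, hCother j hj]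
      · simp
    rcases hM i j0 with h | h <;> simp [binaryMatrix, hMC, h]
  -- choose j1 ∈ S l with (Yᵀ M) l j0 ≤ (Yᵀ M) l j1
  have hSne : (S l).Nonempty := by
    rw [← Finset.card_pos, hScard l]; omega
  obtain ⟨j1, hj1S, hle⟩ : ∃ j1 ∈ S l, (Yᵀ * M) l j0 ≤ (Yᵀ * M) l j1 := by
    by_cases hmem : j0 ∈ S l
    · exact ⟨j0, hmem, le_refl _⟩
    · obtain ⟨j1, hj1⟩ := hSne
      exact ⟨j1, hj1, hStop l j1 hj1 j0 hmem⟩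
  -- RHS row value ≥ (Yᵀ M) l j1
  have hRHS : ∀ i, M i j1 ≤ binaryMatrix (M * Cstarᵀ) i l := by
    intro i
    rcases hM i j1 with h | h
    · rw [h]; unfold binaryMatrix; positivity
    · have hpos : 0 < (M * Cstarᵀ) i l := by
        rw [Matrix.mul_apply]
        have h1 : (1 : ℝ) ≤ ∑ j, M i j * Cstarᵀ j l := by
          have := Finset.single_le_sum (f := fun j => M i j * Cstarᵀ j l)
            (fun j _ => by
              rcases hM i j with h' | h' <;> rcases hC l j with _ | _ <;>
                simp [Matrix.transpose_apply, hCstar, h'] <;> positivity)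
            (Finset.mem_univ j1)
          simpa [Matrix.transpose_apply, hCstar, hj1S, h] using this
        linarith
      simp [binaryMatrix, hpos, h]
  calc ∑ i, Y i l * binaryMatrix (M * Cᵀ) i l
      = (Yᵀ * M) l j0 := by
        rw [Matrix.mul_apply]
        exact Finset.sum_congr rfl fun i _ => by rw [hLHS i, Matrix.transpose_apply]
    _ ≤ (Yᵀ * M) l j1 := hle
    _ ≤ ∑ i, Y i l * binaryMatrix (M * Cstarᵀ) i l := by
        rw [Matrix.mul_apply]
        apply Finset.sum_le_sum
        intro i _
        rw [Matrix.transpose_apply]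
        rcases hY i l with h | h
        · rw [h]; simp
        · rw [h]; simpa using hRHS i
end

section
/- Let U = {u_1, …, u_n} be a finite set and A_1, …, A_m ⊆ U. Define the binary matrix M ∈ {0,1}^{n×m} by M_{ij} = 1 iff u_i ∈ A_j, and let c ∈ {0,1}^m be a binary selection vector with S = {j : c_j = 1}. Then Σ_{i=1}^n Binary(M c)_i = |⋃_{j∈S} A_j|; that is, with a single label whose ground-truth vector is all ones, the objective Tr(Yᵀ Binary(M Cᵀ)) of the label-assignment problem equals the number of elements of U covered by the selected sets. -/
open Matrix Finset

/-- With `M` the element–set incidence matrix of sets `A_1, …, A_m ⊆ U`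
(`U` of size `n`) and a binary selection vector `c` selecting `S = {j : c_j = 1}`,
the single-label objective `∑ i, Binary(M c)_i` equals the number of elements of `U`
covered by the selected sets, `|⋃_{j ∈ S} A_j|`. -/
theorem binary_cover_count
    {n m : ℕ}
    (A : Fin m → Finset (Fin n))
    (M : Matrix (Fin n) (Fin m) ℝ)
    (hM : ∀ i j, M i j = if i ∈ A j then 1 else 0)
    (c : Fin m → ℝ)
    (hc : ∀ j, c j = 0 ∨ c j = 1) :
    (∑ i, if 0 < M.mulVec c i then (1 : ℝ) else 0) =
      ((Finset.univ.filter fun j => c j = 1).biUnion A).card := by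
  have key : ∀ i : Fin n, (0 < M.mulVec c i) ↔
      i ∈ (Finset.univ.filter fun j => c j = 1).biUnion A := by
    intro i
    have hterm : ∀ j, M i j * c j = if i ∈ A j ∧ c j = 1 then 1 else 0 := by
      intro j
      rcases hc j with h | h <;> simp [hM, h]
    constructor
    · intro hpos
      by_contra hmem
      have : M.mulVec c i = 0 := by
        unfold Matrix.mulVec dotProduct
        apply Finset.sum_eq_zero
        intro j _
        rw [hterm j]
        simp only [Finset.mem_biUnion, Finset.mem_filter, Finset.mem_univ, true_and] at hmem
        by_contra h
        split at h
        · exact hmem ⟨j, ‹i ∈ A j ∧ c j = 1›.2, ‹i ∈ A j ∧ c j = 1›.1⟩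
        · exact h rfl
      simp [this] at hpos
    · intro hmem
      simp only [Finset.mem_biUnion, Finset.mem_filter, Finset.mem_univ, true_and] at hmem
      obtain ⟨j, hcj, hij⟩ := hmem
      unfold Matrix.mulVec dotProduct
      have : ∀ j ∈ Finset.univ, (0:ℝ) ≤ M i j * c j := by
        intro j _; rw [hterm j]; positivity
      calc (0:ℝ) < M i j * c j := by rw [hterm j]; simp [hij, hcj]
        _ ≤ ∑ j, M i j * c j := Finset.single_le_sum this (Finset.mem_univ j)
  calc (∑ i, if 0 < M.mulVec c i then (1:ℝ) else 0)
      = ∑ i, if i ∈ (Finset.univ.filter fun j => c j = 1).biUnion A then (1:ℝ) else 0 := by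
        apply Finset.sum_congr rfl; intro i _; simp [key i]
    _ = _ := by rw [Finset.sum_ite_mem, Finset.univ_inter, Finset.sum_const]; simp
end
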